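/- Let g_H := h₁ + h₂ + h₃ where for integer ς ≥ 3: h₁(ς) = −2(2ς^{2H} + (ς−1)^{2H} + (ς+1)^{2H}), h₂(ς) = 8((ς+1)^{2H+1} − (ς−1)^{2H+1})/(2H+1), h₃(ς) = −8((ς+1)^{2H+2} − 2ς^{2H+2} + (ς−1)^{2H+2})/((2H+2)(2H+1)). Then for every H ∈ (0,1) there is a constant C such that |g_H(ς)| ≤ C ς^{2H−4} for all integers ς ≥ 3; in particular Σ_{ς=0}^{∞} |g_H(ς)| < ∞. -/

import Mathlib

noncomputable def h1 (H : ℝ) (ς : ℕ) : ℝ :=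
  -2 * (2 * (ς : ℝ) ^ (2 * H) + ((ς : ℝ) - 1) ^ (2 * H) + ((ς : ℝ) + 1) ^ (2 * H))

noncomputable def h2 (H : ℝ) (ς : ℕ) : ℝ :=
  8 * (((ς : ℝ) + 1) ^ (2 * H + 1) - ((ς : ℝ) - 1) ^ (2 * H + 1)) / (2 * H + 1)

noncomputable def h3 (H : ℝ) (ς : ℕ) : ℝ :=
  -8 * (((ς : ℝ) + 1) ^ (2 * H + 2) - 2 * (ς : ℝ) ^ (2 * H + 2)
      + ((ς : ℝ) - 1) ^ (2 * H + 2)) / ((2 * H + 2) * (2 * H + 1))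

noncomputable def gH (H : ℝ) (ς : ℕ) : ℝ := h1 H ς + h2 H ς + h3 H ς

/-!
Put `p = 2H` and `u = 1/ς`. Pulling `ς^(p+2)` out of every term gives
`gH H ς = ς^(p+2) * gHProfile p u`, where `gHProfile p` only involves `(1 ± u)^p`, `(1 ± u)^(p+1)`
and `(1 ± u)^(p+2)`. Expanding these by the binomial series to orders `4`, `5` and `6`, all
coefficients of `u^0, …, u^5` cancel, so `gHProfile p u = O(u^6)` as `u → 0`. Hence
`gH H ς = O(ς^(2H-4))` as `ς → ∞`; the finitely many remaining `ς ≥ 3` are absorbed into the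
constant, and summability follows from `2H - 4 < -1`.
-/

open Asymptotics Filter Topology Finset

theorem Ring.choose_succ_right_mul {R : Type*} [CommRing R] [BinomialRing R] (r : R) (n : ℕ) :
    ((n : R) + 1) * Ring.choose r (n + 1) = Ring.choose r n * (r - n) := by
  simpa [Ring.choose_one_right, nsmul_eq_mul] using Ring.choose_smul_choose r (Nat.le_succ n)

theorem Ring.choose_succ_right_eq {K : Type*} [Field K] [CharZero K] [BinomialRing K] (a : K)
    (n : ℕ) : Ring.choose a (n + 1) = Ring.choose a n * (a - n) / (n + 1) := by
  rw [← Ring.choose_succ_right_mul]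
  field_simp

noncomputable def binomialRemainder (a : ℝ) (n : ℕ) (u : ℝ) : ℝ :=
  (1 + u) ^ a - ∑ j ∈ range n, Ring.choose a j * u ^ j

theorem binomialRemainder_isBigO (a : ℝ) (n : ℕ) :
    binomialRemainder a n =O[𝓝 0] fun u => u ^ n := by
  have := Real.one_add_rpow_hasFPowerSeriesAt_zero (a := a) |>.isBigO_sub_partialSum_pow n
  simp only [FormalMultilinearSeries.partialSum, binomialSeries, zero_add,
    FormalMultilinearSeries.ofScalars_apply_eq, smul_eq_mul, ← norm_pow, isBigO_norm_right] at this
  exact this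

theorem binomialRemainder_neg_isBigO (a : ℝ) (n : ℕ) :
    (fun u => binomialRemainder a n (-u)) =O[𝓝 0] fun u => u ^ n := by
  refine ((binomialRemainder_isBigO a n).comp_tendsto
    (continuous_neg.tendsto' 0 0 neg_zero)).trans (isBigO_of_le _ fun u => ?_)
  simp

noncomputable def gHProfile (p u : ℝ) : ℝ :=
  u ^ 2 * (-2 * (2 + (1 - u) ^ p + (1 + u) ^ p))
    + u * (8 * ((1 + u) ^ (p + 1) - (1 - u) ^ (p + 1)) / (p + 1))
    - 8 * ((1 + u) ^ (p + 2) - 2 + (1 - u) ^ (p + 2)) / ((p + 2) * (p + 1))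

theorem gHProfile_eq_binomialRemainder (p : ℝ) (hp1 : p + 1 ≠ 0) (hp2 : p + 2 ≠ 0) (u : ℝ) :
    gHProfile p u =
      -2 * u ^ 2 * (binomialRemainder p 4 u + binomialRemainder p 4 (-u))
      + 8 / (p + 1) * u * (binomialRemainder (p + 1) 5 u - binomialRemainder (p + 1) 5 (-u))
      - 8 / ((p + 2) * (p + 1)) *
          (binomialRemainder (p + 2) 6 u + binomialRemainder (p + 2) 6 (-u)) := by
  simp only [gHProfile, binomialRemainder, sum_range_succ, Ring.choose_succ_right_eq, sum_range_zero,
    Ring.choose_zero_right, ← sub_eq_add_neg]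
  push_cast
  field_simp
  ring

theorem gHProfile_isBigO (p : ℝ) (hp1 : p + 1 ≠ 0) (hp2 : p + 2 ≠ 0) :
    gHProfile p =O[𝓝 0] fun u => u ^ 6 := by
  have hR (a : ℝ) (n : ℕ) := (binomialRemainder_isBigO a n).add (binomialRemainder_neg_isBigO a n)
  have hR' (a : ℝ) (n : ℕ) := (binomialRemainder_isBigO a n).sub (binomialRemainder_neg_isBigO a n)
  have h₀ := ((isBigO_refl (fun u : ℝ => u ^ 2) _).mul (hR p 4)).const_mul_left (-2)
  have h₁ := ((isBigO_refl (fun u : ℝ => u) _).mul (hR' (p + 1) 5)).const_mul_left (8 / (p + 1))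
  have h₂ := (hR (p + 2) 6).const_mul_left (8 / ((p + 2) * (p + 1)))
  simp only [← pow_add, ← pow_succ', ← mul_assoc, Nat.reduceAdd] at h₀ h₁
  simpa only [funext (gHProfile_eq_binomialRemainder p hp1 hp2)] using (h₀.add h₁).sub h₂

theorem gH_eq_rpow_mul_gHProfile (H : ℝ) {n : ℕ} (hn : 1 ≤ n) :
    gH H n = (n : ℝ) ^ (2 * H + 2) * gHProfile (2 * H) (n : ℝ)⁻¹ := by
  unfold gH h1 h2 h3 gHProfile
  have hx : (1 : ℝ) ≤ n := by exact_mod_cast hn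
  set x : ℝ := (n : ℝ)
  have hx0 : 0 < x := by linarith
  have hu : x⁻¹ ≤ 1 := inv_le_one_of_one_le₀ hx
  have hplus (a : ℝ) : (x + 1) ^ a = x ^ a * (1 + x⁻¹) ^ a := by
    rw [← Real.mul_rpow hx0.le (by positivity), mul_add, mul_inv_cancel₀ hx0.ne', mul_one]
  have hminus (a : ℝ) : (x - 1) ^ a = x ^ a * (1 - x⁻¹) ^ a := by
    rw [← Real.mul_rpow hx0.le (by linarith), mul_sub, mul_inv_cancel₀ hx0.ne', mul_one]
  have hpow1 : x ^ (2 * H + 1) = x ^ (2 * H) * x := Real.rpow_add_one hx0.ne' _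
  have hpow2 : x ^ (2 * H + 2) = x ^ (2 * H) * x ^ 2 := by
    rw [Real.rpow_add hx0, show (2 : ℝ) = (2 : ℕ) by norm_num, Real.rpow_natCast]
  rw [hplus, hplus, hplus, hminus, hminus, hminus, hpow1, hpow2]
  field_simp
  ring

theorem gH_isBigO (H : ℝ) (hH1 : 2 * H + 1 ≠ 0) (hH2 : 2 * H + 2 ≠ 0) :
    gH H =O[atTop] fun n : ℕ => (n : ℝ) ^ (2 * H - 4) := by
  have hinv : Tendsto (fun n : ℕ => (n : ℝ)⁻¹) atTop (𝓝 0) :=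
    tendsto_inv_atTop_zero.comp tendsto_natCast_atTop_atTop
  refine ((isBigO_refl (fun n : ℕ => (n : ℝ) ^ (2 * H + 2)) atTop).mul
    ((gHProfile_isBigO (2 * H) hH1 hH2).comp_tendsto hinv)).congr' ?_ ?_
  · filter_upwards [eventually_ge_atTop 1] with n hn
    exact (gH_eq_rpow_mul_gHProfile H hn).symm
  · filter_upwards [eventually_ge_atTop 1] with n hn
    have hx0 : (0 : ℝ) < n := by exact_mod_cast hn
    rw [Function.comp_apply, inv_pow, ← Real.rpow_natCast, ← Real.rpow_neg hx0.le,
      ← Real.rpow_add hx0]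
    congr 1
    push_cast
    ring

theorem stmt14 (H : ℝ) (hH : H ∈ Set.Ioo (0 : ℝ) 1) :
    (∃ C : ℝ, ∀ ς : ℕ, 3 ≤ ς → |gH H ς| ≤ C * (ς : ℝ) ^ (2 * H - 4)) ∧
      Summable (fun ς : ℕ => |gH H ς|) := by
  obtain ⟨hH0, hH1⟩ := hH
  have hO := gH_isBigO H (by linarith) (by linarith)
  refine ⟨?_, summable_of_isBigO_nat (Real.summable_nat_rpow.mpr (by linarith))
    (isBigO_abs_left.mpr hO)⟩
  obtain ⟨C, -, hC⟩ := bound_of_isBigO_nat_atTop hO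
  refine ⟨C, fun n hn => ?_⟩
  have hpos : 0 < (n : ℝ) ^ (2 * H - 4) := Real.rpow_pos_of_pos (by positivity) _
  simpa [abs_of_pos hpos] using hC hpos.ne'
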